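/- For positive integers k₁, k₂, the element z_{k₁,k₂}(a,b) := Σ_{j=1}^{k₁+k₂} ((−1)^j/j) Σ_{π ∈ Π_{j,k₁,k₂}} z_π(a,b) of the free algebra ℚ⟨a,b⟩ is a sum of commutators, where Π_{j,k₁,k₂} is the set of partitions π = (π₁,π₂,π₃) of {1,...,j} with |π₁|+|π₃| = k₁ and |π₂|+|π₃| = k₂, and z_π(a,b) is the ordered product over k = 1,...,j of a (if k ∈ π₁), b (if k ∈ π₂), or ab (if k ∈ π₃). -/

import Mathlib

/-!
Expand every `z_π` into a word in `a, b` of length `N = k₁ + k₂`, marking the letters `a` that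
come from a factor `ab`. This is a bijection from the partitions of `Π_{j,k₁,k₂}` (all `j`) onto
the markings of words of length `N` whose last letter is not glued to the next one, and `j` is
the number of unglued letters. Modulo commutators a word equals all its rotations; since a cyclic
marking with `j` unglued letters can be cut open at exactly `j` places, `N` times the sum becomes
the sum of `(-1)^j` times the word over all cyclic markings. For a fixed cyclic word containing
both letters, the glued positions run over all subsets of its (nonempty) set of cyclic descents
`ab`, so this alternating sum vanishes.
-/

open Finset

section Commutators

variable (R : Type*) {A : Type*} [Ring R] [Ring A] [Module R A]

def commutatorSpan : Submodule R A :=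
  Submodule.span R {y | ∃ p q : A, y = p * q - q * p}

variable {R}

theorem commutatorSpan_mkQ_mul_comm (p q : A) :
    (commutatorSpan R).mkQ (p * q) = (commutatorSpan R).mkQ (q * p) :=
  (Submodule.Quotient.eq _).2 (Submodule.subset_span ⟨p, q, rfl⟩)

theorem commutatorSpan_mkQ_prod_rotate (l : List A) (n : ℕ) :
    (commutatorSpan R).mkQ (l.rotate n).prod = (commutatorSpan R).mkQ l.prod := by
  induction n generalizing l with
  | zero => simp
  | succ n ih =>
    rw [Nat.add_comm, ← List.rotate_rotate, ih]
    cases l with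
    | nil => simp
    | cons x t =>
      simp only [List.rotate_cons_succ, List.rotate_zero, List.prod_append, List.prod_cons,
        List.prod_nil, mul_one]
      exact commutatorSpan_mkQ_mul_comm _ _

theorem commutatorSpan_mkQ_prod_ofFn_add {N : ℕ} [NeZero N] (f : Fin N → A) (r : Fin N) :
    (commutatorSpan R).mkQ (List.ofFn fun i => f (i + r)).prod =
      (commutatorSpan R).mkQ (List.ofFn f).prod := by
  have : (List.ofFn fun i => f (i + r)) = (List.ofFn f).rotate r := by
    refine List.ext_getElem (by simp) fun i h₁ h₂ => ?_
    simp [List.getElem_rotate, Fin.add_def]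
  rw [this, commutatorSpan_mkQ_prod_rotate]

end Commutators

section ShiftDoubleCounting

variable {G β V : Type*} [AddGroup G] [Fintype G] [DecidableEq G] [Fintype β]
  [AddCommMonoid V] (P : (G → β) → Prop) [DecidablePred P] (q : β → Prop) [DecidablePred q]
  (g : (G → β) → V)

theorem sum_filter_apply_eq_of_shift_invariant
    (hP : ∀ M c, P (fun i => M (i + c)) ↔ P M) (hg : ∀ M c, g (fun i => M (i + c)) = g M)
    (r s : G) :
    ∑ M with P M ∧ q (M r), g M = ∑ M with P M ∧ q (M s), g M := by
  let e : (G → β) ≃ (G → β) :=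
    { toFun M i := M (i + (-s + r))
      invFun M i := M (i - (-s + r))
      left_inv M := by simp
      right_inv M := by simp }
  refine Finset.sum_equiv e (fun M => ?_) (fun M _ => (hg M _).symm)
  simp only [e, Equiv.coe_fn_mk, Finset.mem_filter, Finset.mem_univ, true_and, hP,
    add_neg_cancel_left]

theorem card_nsmul_sum_filter_apply_of_shift_invariant
    (hP : ∀ M c, P (fun i => M (i + c)) ↔ P M) (hg : ∀ M c, g (fun i => M (i + c)) = g M)
    (s : G) :
    Fintype.card G • ∑ M with P M ∧ q (M s), g M = ∑ M with P M, #{i | q (M i)} • g M := by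
  calc Fintype.card G • ∑ M with P M ∧ q (M s), g M
      = ∑ r : G, ∑ M with P M ∧ q (M r), g M := by
        rw [← Finset.card_univ, ← Finset.sum_const]
        exact Finset.sum_congr rfl fun r _ =>
          (sum_filter_apply_eq_of_shift_invariant P q g hP hg r s).symm
    _ = ∑ M with P M, #{i | q (M i)} • g M := by
        simp_rw [← Finset.sum_const]
        exact Finset.sum_comm' fun r M => by simp [and_comm]

end ShiftDoubleCounting

section TuplesAsLists

theorem card_filter_eq_countP_ofFn {α : Type*} {n : ℕ} (f : Fin n → α) (p : α → Prop)
    [DecidablePred p] : #{i | p (f i)} = (List.ofFn f).countP (fun a => p a) := by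
  induction n with
  | zero => simp
  | succ n ih =>
    rw [Fin.card_filter_univ_succ, List.ofFn_succ, List.countP_cons, ih]
    split_ifs <;> simp_all

theorem List.ofFn_getD_eq {α : Type*} {N : ℕ} {l : List α} (h : l.length = N) (d : α) :
    List.ofFn (fun i : Fin N => l.getD i d) = l := by
  subst h
  simp

variable {N : ℕ} [NeZero N]

theorem card_filter_apply_add {α : Type*} (p : α → Prop) [DecidablePred p] (M : Fin N → α)
    (c : Fin N) : #{i | p (M (i + c))} = #{i | p (M i)} :=
  Finset.card_equiv (Equiv.addRight c) (by simp)

theorem Fin.val_neg_one_of_neZero : ((-1 : Fin N) : ℕ) = N - 1 := by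
  obtain ⟨n, rfl⟩ := Nat.exists_eq_succ_of_ne_zero (NeZero.ne N)
  simp [Fin.coe_neg_one]

theorem List.getLast?_ofFn_eq {α : Type*} (M : Fin N → α) :
    (List.ofFn M).getLast? = some (M (-1)) := by
  rw [List.getLast?_eq_some_getLast (by simp [NeZero.ne N]), List.getLast_ofFn]
  congr 2
  exact Fin.ext Fin.val_neg_one_of_neZero.symm

theorem forall_rel_apply_add_one_iff {α : Type*} (R : α → α → Prop) (M : Fin N → α) :
    (∀ i, R (M i) (M (i + 1))) ↔ (List.ofFn M).IsChain R ∧ R (M (-1)) (M 0) := by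
  rw [List.isChain_iff_getElem]
  simp only [List.length_ofFn, List.getElem_ofFn]
  refine ⟨fun h => ⟨fun i hi => ?_, by simpa using h (-1)⟩, fun ⟨h, hlast⟩ i => ?_⟩
  · have hsucc : (⟨i, by omega⟩ + 1 : Fin N) = ⟨i + 1, hi⟩ := Fin.ext (Fin.val_add_one_of_lt' hi)
    simpa [hsucc] using h ⟨i, by omega⟩
  · by_cases hi : i.val + 1 < N
    · have hsucc : i + 1 = ⟨i + 1, hi⟩ := Fin.ext (Fin.val_add_one_of_lt' hi)
      simpa [hsucc] using h i hi
    · obtain rfl : i = -1 := Fin.ext (by rw [Fin.val_neg_one_of_neZero]; omega)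
      simpa using hlast

end TuplesAsLists

theorem neg_one_pow_card_compl {α : Type*} [Fintype α] [DecidableEq α] (S : Finset α) :
    (-1 : ℤ) ^ #Sᶜ = (-1) ^ Fintype.card α * (-1) ^ #S := by
  calc (-1 : ℤ) ^ #Sᶜ = (-1) ^ #Sᶜ * ((-1) ^ #S * (-1) ^ #S) := by
        rw [← pow_add, Even.neg_one_pow ⟨_, rfl⟩, mul_one]
    _ = (-1) ^ Fintype.card α * (-1) ^ #S := by
        rw [← mul_assoc, ← pow_add, card_compl_add_card]

section CyclicMarkings

/- A marked letter `(x, g)` is the letter `a` if `x = true` and `b` otherwise; `g = true` says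
that it is an `a` glued to the following letter, which must be an unglued `b`. -/
def GluedNext (p q : Bool × Bool) : Prop :=
  p.2 = true → p = (true, true) ∧ q = (false, false)

instance : DecidableRel GluedNext := fun _ _ => by unfold GluedNext; infer_instance

variable {N : ℕ} [NeZero N]

def IsCyclicMarking (M : Fin N → Bool × Bool) : Prop := ∀ i, GluedNext (M i) (M (i + 1))

instance : DecidablePred (IsCyclicMarking (N := N)) :=
  fun _ => by unfold IsCyclicMarking; infer_instance

def numBlocks (M : Fin N → Bool × Bool) : ℕ := #{i | (M i).2 = false}

def descents (w : Fin N → Bool) : Finset (Fin N) := {i | w i = true ∧ w (i + 1) = false}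

theorem isCyclicMarking_shift_iff (M : Fin N → Bool × Bool) (c : Fin N) :
    IsCyclicMarking (fun i => M (i + c)) ↔ IsCyclicMarking M := by
  simp only [IsCyclicMarking, add_right_comm _ (1 : Fin N) c]
  exact ⟨fun h i => by simpa using h (i - c), fun h i => h (i + c)⟩

theorem numBlocks_shift (M : Fin N → Bool × Bool) (c : Fin N) :
    numBlocks (fun i => M (i + c)) = numBlocks M :=
  card_filter_apply_add (· = false) (fun i => (M i).2) c

theorem numBlocks_pos {M : Fin N → Bool × Bool} (hM : IsCyclicMarking M) : 0 < numBlocks M := by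
  refine Finset.card_pos.2 ?_
  by_cases h : (M 0).2 = false
  · exact ⟨0, by simp [h]⟩
  · have hnext := ((hM 0) (by simpa using h)).2
    exact ⟨0 + 1, by simp only [mem_filter, mem_univ, true_and, hnext]⟩

open Fin.CommRing in
theorem descents_nonempty {w : Fin N → Bool} (h₁ : ∃ i, w i = true) (h₂ : ∃ i, w i = false) :
    (descents w).Nonempty := by
  obtain ⟨i, hi⟩ := h₁
  obtain ⟨j, hj⟩ := h₂
  by_contra hD
  have hstep : ∀ k, w k = true → w (k + 1) = true := fun k hk => by
    by_contra h
    exact hD ⟨k, by simp [descents, hk, h]⟩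
  have hall : ∀ n : ℕ, w (i + n) = true := fun n => by
    induction n with
    | zero => simpa using hi
    | succ n ih => simpa [add_assoc] using hstep _ ih
  simpa [hj] using hall (j - i).val

theorem sum_isCyclicMarking_fiber_neg_one_pow_numBlocks (w : Fin N → Bool)
    (hw : (descents w).Nonempty) :
    ∑ M with IsCyclicMarking M ∧ (fun i => (M i).1) = w, (-1 : ℤ) ^ numBlocks M = 0 := by
  calc ∑ M with IsCyclicMarking M ∧ (fun i => (M i).1) = w, (-1 : ℤ) ^ numBlocks M
      = ∑ S ∈ (descents w).powerset, (-1 : ℤ) ^ #Sᶜ := by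
        refine Finset.sum_nbij' (fun M => ({i | (M i).2 = true} : Finset (Fin N)))
          (fun S i => (w i, decide (i ∈ S))) ?_ ?_ ?_ ?_ ?_
        · intro M hM
          obtain ⟨hMark, rfl⟩ : IsCyclicMarking M ∧ (fun i => (M i).1) = w := by simpa using hM
          refine mem_powerset.2 fun i hi => ?_
          obtain ⟨hi, hnext⟩ := hMark i (by simpa using hi)
          simp [descents, hi, hnext]
        · intro S hS
          have hS : ∀ i ∈ S, w i = true ∧ w (i + 1) = false := fun i hi => by
            simpa [descents] using mem_powerset.1 hS hi
          refine mem_filter.2 ⟨mem_univ _, fun i hi => ?_, rfl⟩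
          obtain ⟨hwi, hwi'⟩ := hS i (by simpa using hi)
          have hi' : i + 1 ∉ S := fun h => absurd (hS _ h).1 (by simp [hwi'])
          simp_all
        · intro M hM
          obtain ⟨-, rfl⟩ : IsCyclicMarking M ∧ (fun i => (M i).1) = w := by simpa using hM
          ext i <;> simp
        · intro S _
          ext i
          simp
        · intro M _
          simp [numBlocks, compl_filter]
    _ = 0 := by
      simp_rw [neg_one_pow_card_compl, ← Finset.mul_sum,
        sum_powerset_neg_one_pow_card_of_nonempty hw, mul_zero]

theorem sum_isCyclicMarking_neg_one_pow_numBlocks_smul {V : Type*} [AddCommGroup V] {k : ℕ}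
    (hk₀ : 0 < k) (hkN : k < N) (φ : (Fin N → Bool) → V) :
    ∑ M with IsCyclicMarking M ∧ #{i | (M i).1 = true} = k,
      (-1 : ℤ) ^ numBlocks M • φ (fun i => (M i).1) = 0 := by
  rw [← Finset.sum_fiberwise_of_maps_to (g := fun M i => (M i).1)
    (t := {w : Fin N → Bool | #{i | w i = true} = k}) (fun M hM => by simp_all)]
  refine Finset.sum_eq_zero fun w hw => ?_
  replace hw : #{i | w i = true} = k := by simpa using hw
  have hD : (descents w).Nonempty := by
    refine descents_nonempty ?_ ?_
    · obtain ⟨i, hi⟩ := Finset.card_pos.1 (hw ▸ hk₀)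
      exact ⟨i, by simpa using hi⟩
    · by_contra! h
      have : #{i | w i = true} = N := by simp [h]
      omega
  calc ∑ M ∈ {M | IsCyclicMarking M ∧ #{i | (M i).1 = true} = k} with (fun i => (M i).1) = w,
        (-1 : ℤ) ^ numBlocks M • φ (fun i => (M i).1)
      = (∑ M with IsCyclicMarking M ∧ (fun i => (M i).1) = w, (-1 : ℤ) ^ numBlocks M) • φ w := by
        rw [Finset.sum_smul, Finset.filter_filter]
        refine Finset.sum_congr (Finset.filter_congr fun M _ => ?_) fun M hM => ?_
        · constructor
          · rintro ⟨⟨h, -⟩, rfl⟩; exact ⟨h, rfl⟩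
          · rintro ⟨h, rfl⟩; exact ⟨⟨h, hw⟩, rfl⟩
        · rw [(Finset.mem_filter.1 hM).2.2]
    _ = 0 := by rw [sum_isCyclicMarking_fiber_neg_one_pow_numBlocks w hD, zero_smul]

theorem sum_linearMarkings_smul_eq_zero {V : Type*} [AddCommGroup V] [Module ℚ V] {k₁ k₂ : ℕ}
    [NeZero (k₁ + k₂)] (hk₁ : 1 ≤ k₁) (hk₂ : 1 ≤ k₂) (φ : (Fin (k₁ + k₂) → Bool) → V)
    (hφ : ∀ w c, φ (fun i => w (i + c)) = φ w) :
    ∑ M : Fin (k₁ + k₂) → Bool × Bool with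
        (IsCyclicMarking M ∧ #{i | (M i).1 = true} = k₁) ∧ (M (-1)).2 = false,
      ((-1 : ℚ) ^ numBlocks M / numBlocks M) • φ (fun i => (M i).1) = 0 := by
  have hrotation := card_nsmul_sum_filter_apply_of_shift_invariant
    (fun M => IsCyclicMarking M ∧ #{i | (M i).1 = true} = k₁) (fun p => p.2 = false)
    (fun M => ((-1 : ℚ) ^ numBlocks M / numBlocks M) • φ (fun i => (M i).1))
    (fun M c => by
      simp only [isCyclicMarking_shift_iff, card_filter_apply_add (· = true) (fun i => (M i).1)])
    (fun M c => by simp only [numBlocks_shift, hφ fun i => (M i).1]) (-1)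
  rw [Fintype.card_fin] at hrotation
  have hN : ((k₁ + k₂ : ℕ) : ℚ) ≠ 0 := Nat.cast_ne_zero.2 (NeZero.ne _)
  refine (smul_right_injective V hN).eq_iff.1 ?_
  rw [smul_zero, Nat.cast_smul_eq_nsmul, hrotation]
  refine Eq.trans (Finset.sum_congr rfl fun M hM => ?_)
    (sum_isCyclicMarking_neg_one_pow_numBlocks_smul (k := k₁) (by omega) (by omega) φ)
  have hpos := numBlocks_pos (Finset.mem_filter.1 hM).2.1
  have hcancel : (numBlocks M : ℚ) * ((-1) ^ numBlocks M / numBlocks M) = (-1) ^ numBlocks M := by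
    field_simp
  rw [← numBlocks, ← Nat.cast_smul_eq_nsmul ℚ, smul_smul, hcancel, ← Int.cast_smul_eq_zsmul ℚ]
  push_cast
  rfl

end CyclicMarkings

section BlockEncoding

def block : Fin 3 → List (Bool × Bool) :=
  ![[(true, false)], [(false, false)], [(true, true), (false, false)]]

def encode (L : List (Fin 3)) : List (Bool × Bool) := L.flatMap block

def decode : List (Bool × Bool) → List (Fin 3)
  | [] => []
  | (true, false) :: l => 0 :: decode l
  | (false, false) :: l => 1 :: decode l
  | [(_, true)] => []
  | (_, true) :: _ :: l => 2 :: decode l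

def IsLinearMarking (l : List (Bool × Bool)) : Prop :=
  l.IsChain GluedNext ∧ ∀ p ∈ l.getLast?, p.2 = false

@[simp]
theorem encode_nil : encode [] = [] := rfl

@[simp]
theorem encode_cons (x : Fin 3) (L : List (Fin 3)) : encode (x :: L) = block x ++ encode L :=
  List.flatMap_cons

theorem decode_encode (L : List (Fin 3)) : decode (encode L) = L := by
  induction L with
  | nil => rfl
  | cons x L ih => fin_cases x <;> simp [block, decode, ih]

theorem isLinearMarking_encode (L : List (Fin 3)) : IsLinearMarking (encode L) := by
  induction L with
  | nil => simp [IsLinearMarking]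
  | cons x L ih =>
    obtain ⟨hc, hl⟩ := ih
    refine ⟨by fin_cases x <;> simp [block, List.isChain_cons, GluedNext, hc], fun p hp => ?_⟩
    rw [encode_cons, List.getLast?_append] at hp
    cases h : (encode L).getLast? with
    | none => rw [h] at hp; fin_cases x <;> simp [block] at hp <;> simp [← hp]
    | some q => simp_all

theorem IsLinearMarking.tail {p : Bool × Bool} {l : List (Bool × Bool)}
    (h : IsLinearMarking (p :: l)) : IsLinearMarking l :=
  ⟨h.1.tail, fun _ hq => h.2 _ (List.mem_getLast?_cons hq)⟩

theorem encode_decode : ∀ {l : List (Bool × Bool)}, IsLinearMarking l → encode (decode l) = l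
  | [], _ => rfl
  | (true, false) :: _, h => by simp [decode, block, encode_decode h.tail]
  | (false, false) :: _, h => by simp [decode, block, encode_decode h.tail]
  | [(_, true)], h => by simp [IsLinearMarking] at h
  | (_, true) :: _ :: _, h => by
    obtain ⟨hx, rfl⟩ := (List.isChain_cons_cons.1 h.1).1 rfl
    obtain rfl : _ = true := congrArg Prod.fst hx
    simp [decode, block, encode_decode h.tail.tail]

theorem countP_fst_encode (L : List (Fin 3)) :
    (encode L).countP (fun p => p.1 = true) = L.countP (· ≠ 1) := by
  induction L with
  | nil => rfl
  | cons x L ih => fin_cases x <;> simp_all [block]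

theorem countP_not_fst_encode (L : List (Fin 3)) :
    (encode L).countP (fun p => p.1 = false) = L.countP (· ≠ 0) := by
  induction L with
  | nil => rfl
  | cons x L ih => fin_cases x <;> simp_all [block]

theorem countP_unglued_encode (L : List (Fin 3)) :
    (encode L).countP (fun p => p.2 = false) = L.length := by
  induction L with
  | nil => rfl
  | cons x L ih => fin_cases x <;> simp_all [block]

theorem length_encode (L : List (Fin 3)) :
    (encode L).length = L.countP (· ≠ 1) + L.countP (· ≠ 0) := by
  induction L with
  | nil => rfl
  | cons x L ih => fin_cases x <;> simp [block, ih] <;> omega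

theorem prod_map_block {M : Type*} [Monoid M] (f : Bool → M) (x : Fin 3) :
    ((block x).map fun p => f p.1).prod =
      if x = 0 then f true else if x = 1 then f false else f true * f false := by
  fin_cases x <;> simp [block]

theorem prod_map_encode {M : Type*} [Monoid M] (f : Bool × Bool → M) (L : List (Fin 3)) :
    ((encode L).map f).prod = (L.map fun x => ((block x).map f).prod).prod := by
  induction L with
  | nil => rfl
  | cons x L ih => simp [ih]

variable {N : ℕ} {M : Fin N → Bool × Bool} {L : List (Fin 3)}

theorem isLinearMarking_ofFn_iff [NeZero N] :
    IsLinearMarking (List.ofFn M) ↔ IsCyclicMarking M ∧ (M (-1)).2 = false := by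
  rw [IsLinearMarking, List.getLast?_ofFn_eq, IsCyclicMarking, forall_rel_apply_add_one_iff]
  simp only [Option.mem_def, Option.some.injEq, forall_eq']
  exact ⟨fun ⟨hc, hl⟩ => ⟨⟨hc, by simp [GluedNext, hl]⟩, hl⟩, fun ⟨⟨hc, _⟩, hl⟩ => ⟨hc, hl⟩⟩

theorem card_fst_eq_of_ofFn_eq_encode (h : List.ofFn M = encode L) :
    #{i | (M i).1 = true} = L.countP (· ≠ 1) := by
  rw [card_filter_eq_countP_ofFn M (·.1 = true), h, countP_fst_encode]

theorem card_not_fst_eq_of_ofFn_eq_encode (h : List.ofFn M = encode L) :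
    #{i | (M i).1 = false} = L.countP (· ≠ 0) := by
  rw [card_filter_eq_countP_ofFn M (·.1 = false), h, countP_not_fst_encode]

theorem numBlocks_eq_of_ofFn_eq_encode [NeZero N] (h : List.ofFn M = encode L) :
    numBlocks M = L.length := by
  rw [numBlocks, card_filter_eq_countP_ofFn M (·.2 = false), h, countP_unglued_encode]

end BlockEncoding

section Partitions

def partitionsWithCounts (k₁ k₂ : ℕ) : Finset (Σ j, Fin j → Fin 3) :=
  (Icc 1 (k₁ + k₂)).sigma fun _ => {π | #{k | π k ≠ 1} = k₁ ∧ #{k | π k ≠ 0} = k₂}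

variable {k₁ k₂ : ℕ}

theorem length_encode_of_mem_partitionsWithCounts {x : Σ j, Fin j → Fin 3}
    (hx : x ∈ partitionsWithCounts k₁ k₂) : (encode (List.ofFn x.2)).length = k₁ + k₂ := by
  simp only [partitionsWithCounts, mem_sigma, mem_filter, mem_univ, true_and] at hx
  rw [length_encode, ← card_filter_eq_countP_ofFn x.2 (· ≠ 1),
    ← card_filter_eq_countP_ofFn x.2 (· ≠ 0), hx.2.1, hx.2.2]

theorem mem_partitionsWithCounts_of_ofFn_eq_encode [NeZero (k₁ + k₂)]
    {M : Fin (k₁ + k₂) → Bool × Bool} {L : List (Fin 3)} (hL : List.ofFn M = encode L)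
    (hM : IsCyclicMarking M) (hk₁ : #{i | (M i).1 = true} = k₁) :
    List.equivSigmaTuple L ∈ partitionsWithCounts k₁ k₂ := by
  have hk₂ : #{i | (M i).1 = false} = k₂ := by
    have := card_filter_add_card_filter_not (s := univ) (fun i => (M i).1 = true)
    simp_all
  have hblocks := numBlocks_eq_of_ofFn_eq_encode hL
  simp only [partitionsWithCounts, mem_sigma, mem_filter, mem_univ, true_and, mem_Icc,
    List.equivSigmaTuple, Equiv.coe_fn_mk]
  refine ⟨⟨hblocks ▸ numBlocks_pos hM, hblocks ▸ (card_filter_le _ _).trans (by simp)⟩, ?_, ?_⟩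
  · rw [card_filter_eq_countP_ofFn L.get (· ≠ 1), List.ofFn_get,
      ← card_fst_eq_of_ofFn_eq_encode hL, hk₁]
  · rw [card_filter_eq_countP_ofFn L.get (· ≠ 0), List.ofFn_get,
      ← card_not_fst_eq_of_ofFn_eq_encode hL, hk₂]

theorem sum_partitionsWithCounts_eq_sum_linearMarkings {V : Type*} [AddCommMonoid V]
    [NeZero (k₁ + k₂)] (F : ℕ → List (Bool × Bool) → V) :
    ∑ x ∈ partitionsWithCounts k₁ k₂, F x.1 (encode (List.ofFn x.2)) =
      ∑ M : Fin (k₁ + k₂) → Bool × Bool with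
        (IsCyclicMarking M ∧ #{i | (M i).1 = true} = k₁) ∧ (M (-1)).2 = false,
        F (numBlocks M) (List.ofFn M) := by
  have hofFn {x} (hx : x ∈ partitionsWithCounts k₁ k₂) :
      List.ofFn (fun i : Fin (k₁ + k₂) => (encode (List.ofFn x.2)).getD i (false, false)) =
        encode (List.ofFn x.2) :=
    List.ofFn_getD_eq (length_encode_of_mem_partitionsWithCounts hx) _
  have hdecode {M : Fin (k₁ + k₂) → Bool × Bool} (hM : IsCyclicMarking M)
      (hlast : (M (-1)).2 = false) : encode (decode (List.ofFn M)) = List.ofFn M :=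
    encode_decode (isLinearMarking_ofFn_iff.2 ⟨hM, hlast⟩)
  refine Finset.sum_nbij' (fun x i => (encode (List.ofFn x.2)).getD i (false, false))
    (fun M => List.equivSigmaTuple (decode (List.ofFn M))) (fun x hx => ?_) (fun M hM => ?_)
    (fun x hx => ?_) (fun M hM => ?_) (fun x hx => ?_)
  · have hlin := isLinearMarking_ofFn_iff.1 (hofFn hx ▸ isLinearMarking_encode _)
    have hk₁ : #{k | x.2 k ≠ 1} = k₁ := by
      simp only [partitionsWithCounts, mem_sigma, mem_filter] at hx
      exact hx.2.2.1
    simp only [mem_filter, mem_univ, true_and]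
    refine ⟨⟨hlin.1, ?_⟩, hlin.2⟩
    rw [card_fst_eq_of_ofFn_eq_encode (hofFn hx), ← card_filter_eq_countP_ofFn x.2 (· ≠ 1), hk₁]
  · simp only [mem_filter, mem_univ, true_and] at hM
    exact mem_partitionsWithCounts_of_ofFn_eq_encode (hdecode hM.1.1 hM.2).symm hM.1.1 hM.1.2
  · simp only [hofFn hx, decode_encode]
    exact List.equivSigmaTuple.apply_symm_apply x
  · simp only [mem_filter, mem_univ, true_and] at hM
    funext i
    simp [List.equivSigmaTuple, hdecode hM.1.1 hM.2]
  · rw [hofFn hx, numBlocks_eq_of_ofFn_eq_encode (hofFn hx), List.length_ofFn]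

end Partitions

/-- For k₁, k₂ ≥ 1, the element
z_{k₁,k₂}(a,b) = ∑_{j=1}^{k₁+k₂} ((−1)^j/j) ∑_{π ∈ Π_{j,k₁,k₂}} z_π(a,b)
of ℚ⟨a,b⟩ is a sum of commutators. A partition π of {1,…,j} into three parts
is encoded as π : Fin j → Fin 3 (value 0 ↦ factor a, 1 ↦ factor b,
2 ↦ factor ab); Π_{j,k₁,k₂} consists of those π with
|π₁|+|π₃| = k₁ and |π₂|+|π₃| = k₂, and z_π is the ordered product. -/
theorem z_k1k2_mem_commutatorSubspace (k₁ k₂ : ℕ) (hk₁ : 1 ≤ k₁) (hk₂ : 1 ≤ k₂)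
    (a b : FreeAlgebra ℚ Bool) (ha : a = FreeAlgebra.ι ℚ true)
    (hb : b = FreeAlgebra.ι ℚ false) :
    (∑ j ∈ Finset.Icc 1 (k₁ + k₂), ((-1 : ℚ) ^ j / (j : ℚ)) •
        ∑ π ∈ (Finset.univ : Finset (Fin j → Fin 3)).filter
            (fun π => (Finset.univ.filter fun k => π k ≠ 1).card = k₁ ∧
                      (Finset.univ.filter fun k => π k ≠ 0).card = k₂),
          (List.ofFn fun k : Fin j =>
            if π k = 0 then a else if π k = 1 then b else a * b).prod) ∈
      Submodule.span ℚ
        {y : FreeAlgebra ℚ Bool | ∃ p q, y = p * q - q * p} := by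
  subst ha hb
  have : NeZero (k₁ + k₂) := ⟨by omega⟩
  let tr := (commutatorSpan ℚ (A := FreeAlgebra ℚ Bool)).mkQ
  change _ ∈ commutatorSpan ℚ
  rw [← Submodule.Quotient.mk_eq_zero, ← Submodule.mkQ_apply]
  calc tr _ = ∑ x ∈ partitionsWithCounts k₁ k₂, ((-1 : ℚ) ^ x.1 / (x.1 : ℚ)) •
        tr ((encode (List.ofFn x.2)).map fun p => FreeAlgebra.ι ℚ p.1).prod := by
        simp only [map_sum, map_smul, Finset.smul_sum, partitionsWithCounts, Finset.sum_sigma,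
          prod_map_encode, prod_map_block, List.map_ofFn]
        rfl
    _ = ∑ M : Fin (k₁ + k₂) → Bool × Bool with
          (IsCyclicMarking M ∧ #{i | (M i).1 = true} = k₁) ∧ (M (-1)).2 = false,
          ((-1 : ℚ) ^ numBlocks M / numBlocks M) •
            tr (List.ofFn fun i => FreeAlgebra.ι ℚ (M i).1).prod := by
        rw [sum_partitionsWithCounts_eq_sum_linearMarkings
          (fun j l => ((-1 : ℚ) ^ j / (j : ℚ)) • tr (l.map fun p => FreeAlgebra.ι ℚ p.1).prod)]
        simp only [List.map_ofFn]
        rfl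
    _ = 0 := sum_linearMarkings_smul_eq_zero hk₁ hk₂
        (fun w => tr (List.ofFn fun i => FreeAlgebra.ι ℚ (w i)).prod) fun w c =>
          commutatorSpan_mkQ_prod_ofFn_add (fun i => FreeAlgebra.ι ℚ (w i)) c
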